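/- arXiv:2209.14596 — 5 statements merged into one kernel-verified Lean document; each statement's English description precedes it below -/
import Mathlib

section
/- If M and N are A-modules and at least one of them is a-coreduced, then the A-module M ⊗_A N is a-coreduced. -/
open TensorProduct

/-- `M` is `a`-coreduced: `aM = a²M`. -/
def IsACoreduced {A : Type*} [CommRing A] (a : Ideal A)
    (M : Type*) [AddCommGroup M] [Module A M] : Prop :=
  a • (⊤ : Submodule A M) = (a ^ 2) • (⊤ : Submodule A M)

lemma tmul_mem_smul_top_left {A : Type*} [CommRing A] (b : Ideal A)
    {M : Type*} [AddCommGroup M] [Module A M]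
    {N : Type*} [AddCommGroup N] [Module A N]
    {m : M} (hm : m ∈ b • (⊤ : Submodule A M)) (n : N) :
    m ⊗ₜ[A] n ∈ b • (⊤ : Submodule A (M ⊗[A] N)) := by
  refine Submodule.smul_induction_on hm ?_ ?_
  · intro r hr m' _
    rw [← smul_tmul']
    exact Submodule.smul_mem_smul hr trivial
  · intro x y hx hy
    rw [add_tmul]
    exact Submodule.add_mem _ hx hy

lemma tmul_mem_smul_top_right {A : Type*} [CommRing A] (b : Ideal A)
    {M : Type*} [AddCommGroup M] [Module A M]
    {N : Type*} [AddCommGroup N] [Module A N]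
    (m : M) {n : N} (hn : n ∈ b • (⊤ : Submodule A N)) :
    m ⊗ₜ[A] n ∈ b • (⊤ : Submodule A (M ⊗[A] N)) := by
  refine Submodule.smul_induction_on hn ?_ ?_
  · intro r hr n' _
    rw [← smul_tmul, ← smul_tmul']
    exact Submodule.smul_mem_smul hr trivial
  · intro x y hx hy
    rw [tmul_add]
    exact Submodule.add_mem _ hx hy

theorem stmt3 {A : Type*} [CommRing A] (a : Ideal A)
    (M : Type*) [AddCommGroup M] [Module A M]
    (N : Type*) [AddCommGroup N] [Module A N]
    (h : IsACoreduced a M ∨ IsACoreduced a N) :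
    IsACoreduced a (M ⊗[A] N) := by
  unfold IsACoreduced at *
  apply le_antisymm
  · apply Submodule.smul_le.mpr
    intro r hr x _
    induction x using TensorProduct.induction_on with
    | zero => simp
    | tmul m n =>
      rcases h with hM | hN
      · have : r • m ∈ (a ^ 2) • (⊤ : Submodule A M) := by
          rw [← hM]; exact Submodule.smul_mem_smul hr trivial
        simpa [smul_tmul'] using tmul_mem_smul_top_left (a ^ 2) this n
      · have : r • n ∈ (a ^ 2) • (⊤ : Submodule A N) := by
          rw [← hN]; exact Submodule.smul_mem_smul hr trivial
        have h2 := tmul_mem_smul_top_right (a ^ 2) m this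
        rwa [show r • (m ⊗ₜ[A] n) = m ⊗ₜ[A] (r • n) by rw [smul_tmul', smul_tmul]]
    | add x y hx hy =>
      rw [smul_add]
      exact Submodule.add_mem _ (hx trivial) (hy trivial)
  · exact Submodule.smul_mono_left (by rw [pow_two]; exact Ideal.mul_le_left)
end

section
/- An A-module M is a-coreduced if and only if the canonical surjection A/a² ⊗_A M → A/a ⊗_A M, induced by the projection A/a² → A/a, is an isomorphism. -/
open TensorProduct

theorem stmt6 {A : Type*} [CommRing A] (a : Ideal A)
    (M : Type*) [AddCommGroup M] [Module A M] :
    IsACoreduced a M ↔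
      Function.Bijective
        (LinearMap.rTensor M
          (Submodule.mapQ (a ^ 2 : Ideal A) a LinearMap.id
            (fun x hx => Ideal.pow_le_self two_ne_zero hx)) :
          (A ⧸ (a ^ 2 : Ideal A)) ⊗[A] M → (A ⧸ a) ⊗[A] M) := by
  classical
  set f : (A ⧸ (a ^ 2 : Ideal A)) ⊗[A] M →ₗ[A] (A ⧸ a) ⊗[A] M :=
    (LinearMap.rTensor M
      (Submodule.mapQ (a ^ 2 : Ideal A) a LinearMap.id
        (fun x hx => Ideal.pow_le_self two_ne_zero hx)))
  have hle : (a ^ 2 : Ideal A) • (⊤ : Submodule A M) ≤ a • ⊤ :=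
    Submodule.smul_mono (Ideal.pow_le_self two_ne_zero) le_rfl
  set g : (M ⧸ (a ^ 2 : Ideal A) • (⊤ : Submodule A M)) →ₗ[A]
      (M ⧸ a • (⊤ : Submodule A M)) :=
    Submodule.mapQ _ _ LinearMap.id hle
  have hcomm : (quotTensorEquivQuotSMul M a).toLinearMap ∘ₗ f =
      g ∘ₗ (quotTensorEquivQuotSMul M (a ^ 2)).toLinearMap := by
    apply TensorProduct.ext'
    intro x y
    obtain ⟨r, rfl⟩ := Ideal.Quotient.mk_surjective x
    have hmk : (Submodule.mapQ (a ^ 2 : Ideal A) a LinearMap.id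
        (fun x hx => Ideal.pow_le_self two_ne_zero hx))
        (Ideal.Quotient.mk (a ^ 2) r) = Ideal.Quotient.mk a r := rfl
    simp only [f, g, LinearMap.coe_comp, LinearEquiv.coe_coe, Function.comp_apply,
      LinearMap.rTensor_tmul, hmk, quotTensorEquivQuotSMul_mk_tmul,
      Submodule.mapQ_apply, LinearMap.id_coe, id_eq]
  have hfun : (quotTensorEquivQuotSMul M a) ∘ f =
      g ∘ (quotTensorEquivQuotSMul M (a ^ 2)) := by
    ext z; exact congrFun (congrArg DFunLike.coe hcomm) z
  have hbij : Function.Bijective f ↔ Function.Bijective g := by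
    constructor
    · intro hf
      have : Function.Bijective ((quotTensorEquivQuotSMul M a) ∘ f ∘
          ⇑(quotTensorEquivQuotSMul M (a ^ 2)).symm) :=
        ((quotTensorEquivQuotSMul M a).bijective.comp hf).comp
          (quotTensorEquivQuotSMul M (a ^ 2)).symm.bijective
      have heq : ⇑g = (quotTensorEquivQuotSMul M a) ∘ f ∘
          ⇑(quotTensorEquivQuotSMul M (a ^ 2)).symm := by
        ext z
        have := congrFun hfun ((quotTensorEquivQuotSMul M (a ^ 2)).symm z)
        simpa using this.symm
      rw [heq]; exact this
    · intro hg
      have : Function.Bijective ((quotTensorEquivQuotSMul M a).symm ∘ g ∘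
          ⇑(quotTensorEquivQuotSMul M (a ^ 2))) :=
        ((quotTensorEquivQuotSMul M a).symm.bijective.comp hg).comp
          (quotTensorEquivQuotSMul M (a ^ 2)).bijective
      have heq : ⇑f = (quotTensorEquivQuotSMul M a).symm ∘ g ∘
          ⇑(quotTensorEquivQuotSMul M (a ^ 2)) := by
        ext z
        have := congrFun hfun z
        simp only [Function.comp_apply] at this ⊢
        rw [← this]; simp
      rw [heq]; exact this
  rw [hbij]
  constructor
  · intro h
    constructor
    · intro x y hxy
      obtain ⟨m, rfl⟩ := Submodule.Quotient.mk_surjective _ x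
      obtain ⟨n, rfl⟩ := Submodule.Quotient.mk_surjective _ y
      simp only [g, Submodule.mapQ_apply, LinearMap.id_coe, id_eq] at hxy
      rw [Submodule.Quotient.eq] at hxy ⊢
      rw [IsACoreduced] at h
      rw [← h] at *
      exact hxy
    · intro y
      obtain ⟨m, rfl⟩ := Submodule.Quotient.mk_surjective _ y
      exact ⟨Submodule.Quotient.mk m, by simp [g, Submodule.mapQ_apply]⟩
  · intro hg
    refine le_antisymm ?_ hle
    intro m hm
    have h0 : g (Submodule.Quotient.mk m) = 0 := by
      simp only [g, Submodule.mapQ_apply, LinearMap.id_coe, id_eq]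
      rwa [Submodule.Quotient.mk_eq_zero]
    have := hg.1 (show g (Submodule.Quotient.mk m) = g 0 by simpa using h0)
    rwa [Submodule.Quotient.mk_eq_zero] at this
end

section
/- If M is an a-reduced A-module, then the a-torsion submodule Γ_a(M) equals the submodule {m ∈ M : am = 0}, i.e., Γ_a(M) is naturally isomorphic to Hom_A(A/a, M). -/
/-- `M` is `a`-reduced. -/
def IsAReduced {A : Type*} [CommRing A] (a : Ideal A)
    (M : Type*) [AddCommGroup M] [Module A M] : Prop :=
  ∀ x ∈ a, ∀ m : M, x ^ 2 • m = 0 → x • m = 0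

/-- The `a`-power-torsion submodule `Γ_a(M)`. -/
noncomputable def torsionGamma {A : Type*} [CommRing A] (a : Ideal A)
    (M : Type*) [AddCommGroup M] [Module A M] : Submodule A M :=
  ⨆ k : ℕ, Submodule.torsionBySet A M ((a ^ (k + 1) : Ideal A) : Set A)

lemma reduced_pow_smul {A : Type*} [CommRing A] {a : Ideal A}
    {M : Type*} [AddCommGroup M] [Module A M] (hM : IsAReduced a M)
    {x : A} (hx : x ∈ a) (m : M) :
    ∀ n : ℕ, x ^ (n + 1) • m = 0 → x • m = 0 := by
  intro n
  induction n with
  | zero => intro h; simpa using h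
  | succ n ih =>
    intro h
    apply ih
    have h2 : x ^ 2 • (x ^ n • m) = 0 := by
      rw [← mul_smul, ← pow_add]
      have : 2 + n = n + 1 + 1 := by ring
      rw [this]; exact h
    have := hM x hx (x ^ n • m) h2
    rw [← mul_smul, ← pow_succ'] at this
    exact this

theorem stmt8 {A : Type*} [CommRing A] (a : Ideal A)
    (M : Type*) [AddCommGroup M] [Module A M]
    (hM : IsAReduced a M) :
    torsionGamma a M = Submodule.torsionBySet A M (a : Set A) := by
  apply le_antisymm
  · apply iSup_le
    intro k
    intro m hm
    rw [Submodule.mem_torsionBySet_iff] at hm ⊢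
    rintro ⟨x, hx⟩
    have hxk : x ^ (k + 1) ∈ a ^ (k + 1) := Ideal.pow_mem_pow hx _
    exact reduced_pow_smul hM hx m k (hm ⟨x ^ (k + 1), hxk⟩)
  · refine le_trans ?_ (le_iSup _ 0)
    simp [Submodule.torsionBySet]
end

section
/- If M is an a-coreduced A-module, then the a-adic completion Λ_a(M) = lim← M/aᵏM is naturally isomorphic to M/aM (equivalently to A/a ⊗_A M). -/
lemma pow_smul_top_eq {A : Type*} [CommRing A] {a : Ideal A}
    {M : Type*} [AddCommGroup M] [Module A M]
    (hM : IsACoreduced a M) : ∀ n : ℕ, 1 ≤ n →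
    (a ^ n) • (⊤ : Submodule A M) = a • (⊤ : Submodule A M) := by
  intro n hn
  induction n with
  | zero => omega
  | succ k ih =>
    rcases Nat.eq_or_lt_of_le hn with h | h
    · rw [← h, pow_one]
    · have hk : 1 ≤ k := by omega
      calc (a ^ (k + 1)) • (⊤ : Submodule A M)
          = a • ((a ^ k) • (⊤ : Submodule A M)) := by
            rw [pow_succ, mul_comm, ← smul_eq_mul, Submodule.smul_assoc]
        _ = a • (a • (⊤ : Submodule A M)) := by rw [ih hk]
        _ = (a ^ 2) • (⊤ : Submodule A M) := by rw [sq, ← smul_eq_mul, Submodule.smul_assoc]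
        _ = a • (⊤ : Submodule A M) := hM.symm

theorem stmt9 {A : Type*} [CommRing A] (a : Ideal A)
    (M : Type*) [AddCommGroup M] [Module A M]
    (hM : IsACoreduced a M) :
    Nonempty (AdicCompletion a M ≃ₗ[A] (M ⧸ (a • (⊤ : Submodule A M)))) := by
  have key := pow_smul_top_eq hM
  have h1 : (a ^ 1) • (⊤ : Submodule A M) = a • (⊤ : Submodule A M) := key 1 le_rfl
  -- forward map
  let e1 : (M ⧸ ((a ^ 1) • (⊤ : Submodule A M))) ≃ₗ[A] (M ⧸ (a • (⊤ : Submodule A M))) :=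
    Submodule.quotEquivOfEq _ _ h1
  let φ : AdicCompletion a M →ₗ[A] (M ⧸ (a • (⊤ : Submodule A M))) :=
    (e1 : _ →ₗ[A] _) ∘ₗ AdicCompletion.eval a M 1
  -- backward map
  have hker : a • (⊤ : Submodule A M) ≤ LinearMap.ker (AdicCompletion.of a M) := by
    intro x hx
    rw [LinearMap.mem_ker]
    apply Subtype.ext
    funext n
    show Submodule.mkQ _ x = 0
    rw [Submodule.mkQ_apply, Submodule.Quotient.mk_eq_zero]
    rcases Nat.eq_zero_or_pos n with h | h
    · subst h; simp
    · rw [key n h]; exact hx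
  let ψ : (M ⧸ (a • (⊤ : Submodule A M))) →ₗ[A] AdicCompletion a M :=
    Submodule.liftQ _ (AdicCompletion.of a M) hker
  refine ⟨LinearEquiv.ofLinear φ ψ ?_ ?_⟩
  · apply Submodule.linearMap_qext
    ext x
    rfl
  · refine LinearMap.ext fun f => ?_
    obtain ⟨x, hx⟩ := Submodule.mkQ_surjective _ (f.1 1)
    have hφ : φ f = Submodule.mkQ _ x := by
      show e1 (f.1 1) = _
      rw [← hx]
      rfl
    apply Subtype.ext
    funext n
    show (ψ (φ f)).1 n = f.1 n
    rw [hφ]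
    show (AdicCompletion.of a M x).1 n = f.1 n
    rcases Nat.eq_zero_or_pos n with h | h
    · subst h
      have : Subsingleton (M ⧸ ((a ^ 0) • (⊤ : Submodule A M))) :=
        Submodule.Quotient.subsingleton_iff.mpr (by
          simp [pow_zero, Ideal.one_eq_top, Submodule.top_smul])
      exact Subsingleton.elim _ _
    · obtain ⟨y, hy⟩ := Submodule.mkQ_surjective _ (f.1 n)
      have htrans := f.2 h
      rw [← hy] at htrans
      have : AdicCompletion.transitionMap a M h (Submodule.mkQ _ y) = Submodule.mkQ _ y := rfl
      rw [this, ← hx] at htrans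
      have hsub : y - x ∈ (a ^ 1) • (⊤ : Submodule A M) :=
        (Submodule.Quotient.eq _).mp htrans
      rw [h1, ← key n h] at hsub
      rw [AdicCompletion.of_apply, ← hy]
      exact ((Submodule.Quotient.eq _).mpr hsub).symm
end

section
/- Let a be a finitely generated ideal of A and E an injective cogenerator of the category of A-modules. If M is an a-reduced A-module, then Hom_A(M, E) is a-coreduced. -/
universe u v

/-- Key lemma: if `b` is a f.g. ideal, `E` injective, and `f : M →ₗ E` vanishes on the
`b`-torsion of `M`, then `f ∈ b • Hom(M, E)`. -/
lemma key_lemma {A : Type u} [CommRing A] (b : Ideal A) (hfg : b.FG)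
    (E : Type v) [AddCommGroup E] [Module A E]
    (hInj : Module.Injective A E)
    (M : Type v) [AddCommGroup M] [Module A M]
    (f : M →ₗ[A] E) (hf : ∀ m : M, (∀ x ∈ b, x • m = 0) → f m = 0) :
    f ∈ b • (⊤ : Submodule A (M →ₗ[A] E)) := by
  obtain ⟨n, x, hx⟩ := Submodule.fg_iff_exists_fin_generating_family.mp hfg
  -- the map m ↦ (x i • m)
  let φ : M →ₗ[A] (Fin n → M) := LinearMap.pi fun i => x i • LinearMap.id
  have hφ : ∀ (m : M) (i : Fin n), φ m i = x i • m := fun m i => rfl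
  have hxb : ∀ i, x i ∈ b := fun i => hx ▸ Submodule.subset_span ⟨i, rfl⟩
  have hker : LinearMap.ker φ ≤ LinearMap.ker f := by
    intro m hm
    rw [LinearMap.mem_ker] at hm ⊢
    apply hf
    intro y hy
    rw [← hx] at hy
    induction hy using Submodule.span_induction with
    | mem z hz =>
      obtain ⟨i, rfl⟩ := hz
      have := congrFun hm i
      simpa [hφ] using this
    | zero => simp
    | add y z _ _ hy hz => rw [add_smul, hy, hz, add_zero]
    | smul r y _ hy => rw [smul_eq_mul, mul_smul, hy, smul_zero]
  -- factor f through the range of φ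
  let q : (M ⧸ LinearMap.ker φ) →ₗ[A] E := Submodule.liftQ (LinearMap.ker φ) f hker
  let g₀ : LinearMap.range φ →ₗ[A] E := q ∘ₗ φ.quotKerEquivRange.symm.toLinearMap
  obtain ⟨g, hg⟩ := hInj.out (LinearMap.range φ).subtype
    (Submodule.injective_subtype _) g₀
  have hgφ : ∀ m : M, g (φ m) = f m := by
    intro m
    have h1 : g (φ m) = g₀ ⟨φ m, LinearMap.mem_range_self φ m⟩ :=
      hg ⟨φ m, LinearMap.mem_range_self φ m⟩
    rw [h1]
    show q (φ.quotKerEquivRange.symm ⟨φ m, _⟩) = f m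
    rw [LinearMap.quotKerEquivRange_symm_apply_image]
    simp [q, Submodule.mkQ_apply]
  -- write f as a sum of x i • (g ∘ single i)
  have hsum : f = ∑ i : Fin n, x i • (g ∘ₗ LinearMap.single A (fun _ : Fin n => M) i) := by
    ext m
    rw [← hgφ m]
    have h2 : φ m = ∑ i : Fin n, Pi.single i (x i • m) :=
      (Finset.univ_sum_single (φ m)).symm
    rw [h2, map_sum, LinearMap.sum_apply]
    exact Finset.sum_congr rfl fun i _ => by
      rw [LinearMap.smul_apply, LinearMap.comp_apply, LinearMap.single_apply,
        ← map_smul, ← Pi.single_smul]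
  rw [hsum]
  exact Submodule.sum_mem _ fun i _ =>
    Submodule.smul_mem_smul (hxb i) Submodule.mem_top

theorem stmt16 {A : Type u} [CommRing A] (a : Ideal A) (hfg : a.FG)
    (E : Type v) [AddCommGroup E] [Module A E]
    (hInj : Module.Injective A E)
    (hCog : ∀ (N : Type v) [AddCommGroup N] [Module A N] (n : N), n ≠ 0 →
      ∃ f : N →ₗ[A] E, f n ≠ 0)
    (M : Type v) [AddCommGroup M] [Module A M]
    (hM : IsAReduced a M) :
    IsACoreduced a (M →ₗ[A] E) := by
  unfold IsACoreduced
  apply le_antisymm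
  · intro f hf
    apply key_lemma (a ^ 2) (Submodule.FG.pow hfg 2) E hInj M f
    intro m hm
    have hm' : ∀ y ∈ a, y • m = 0 := by
      intro y hy
      refine hM y hy m (hm _ ?_)
      rw [pow_two, pow_two]
      exact Ideal.mul_mem_mul hy hy
    refine Submodule.smul_induction_on hf ?_ ?_
    · intro r hr g _
      rw [LinearMap.smul_apply, ← map_smul g r m, hm' r hr, map_zero]
    · intro f₁ f₂ h1 h2
      rw [LinearMap.add_apply, h1, h2, add_zero]
  · apply Submodule.smul_mono_left
    rw [pow_two]
    exact Ideal.mul_le_left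
end
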